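/- Suppose ‖w‖ = 1 and ‖v‖ ≤ C. There exists a constant A > 0 depending only on C (and v*, m) such that ‖E_Z[g(v,w;Z)]‖² ≤ A(‖∂f/∂v(v,w)‖² + ⟨E_Z[g(v,w;Z)], ∂f/∂w(v,w)⟩). -/

import Mathlib

open InnerProductGeometry

/-- The all-ones vector in `ℝ^m`. -/
noncomputable def onesE (m : ℕ) : EuclideanSpace ℝ (Fin m) :=
  (WithLp.equiv 2 (Fin m → ℝ)).symm fun _ => 1

/-- `∂f/∂v(v,w) = (1/4)(I+11^T)v − (1/4)((1 − 2θ(w,w*)/π)I + 11^T)v*`. -/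
noncomputable def gradV {m n : ℕ} (vs : EuclideanSpace ℝ (Fin m))
    (ws : EuclideanSpace ℝ (Fin n)) (v : EuclideanSpace ℝ (Fin m))
    (w : EuclideanSpace ℝ (Fin n)) : EuclideanSpace ℝ (Fin m) :=
  (1 / 4 : ℝ) • ((v + (∑ i, v i) • onesE m)
    - ((1 - 2 * angle w ws / Real.pi) • vs + (∑ i, vs i) • onesE m))

/-- The expected coarse gradient `E_Z[g(v,w;Z)]` (Lemma 3 of the paper), with
`h(v,v*) = ‖v‖² + (1^Tv)² − (1^Tv)(1^Tv*) + v^Tv*`. -/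
noncomputable def coarseG {m n : ℕ} (vs : EuclideanSpace ℝ (Fin m))
    (ws : EuclideanSpace ℝ (Fin n)) (v : EuclideanSpace ℝ (Fin m))
    (w : EuclideanSpace ℝ (Fin n)) : EuclideanSpace ℝ (Fin n) :=
  ((∑ i, v i ^ 2 + (∑ i, v i) ^ 2 - (∑ i, v i) * (∑ i, vs i) + ∑ i, v i * vs i)
      / (2 * Real.sqrt (2 * Real.pi))) • ‖w‖⁻¹ • w
    - (Real.cos (angle w ws / 2) * (∑ i, v i * vs i) / Real.sqrt (2 * Real.pi)) •
        ‖‖w‖⁻¹ • w + ws‖⁻¹ • (‖w‖⁻¹ • w + ws)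

/-- `∂f/∂w(v,w) = −(v^Tv*)/(2π‖w‖)·(I − ww^T/‖w‖²)w*/‖(I − ww^T/‖w‖²)w*‖`. -/
noncomputable def gradW {m n : ℕ} (vs : EuclideanSpace ℝ (Fin m))
    (ws : EuclideanSpace ℝ (Fin n)) (v : EuclideanSpace ℝ (Fin m))
    (w : EuclideanSpace ℝ (Fin n)) : EuclideanSpace ℝ (Fin n) :=
  (-(∑ i, v i * vs i) / (2 * Real.pi * ‖w‖)) •
    ‖ws - ((inner ℝ w ws : ℝ) / ‖w‖ ^ 2) • w‖⁻¹ •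
      (ws - ((inner ℝ w ws : ℝ) / ‖w‖ ^ 2) • w)

/-! For unit `w` and `w*`, the expected coarse gradient is `(2√(2π))⁻¹` times
`4⟪v, ∂f/∂v⟫ w + (vᵀv*)((1 - 2θ/π) w - w*)`, and its correlation with `∂f/∂w` is
`(vᵀv*)² sin θ / (4π√(2π))`. The first summand is controlled by `‖v‖ ‖∂f/∂v‖`, the second by
the correlation, because `‖(1 - 2θ/π) w - w*‖² ≤ (π/2) sin θ`: writing `θ = 2a`, the left side is
`16((π/2 - a)² sin² a + a² cos² a)/π²`, and Jordan's inequality `2x/π ≤ sin x ≤ x` on `[0, π/2]`,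
applied to `a` and `π/2 - a`, bounds this by `π sin a cos a`. -/

open Real RealInnerProductSpace

lemma one_sub_two_mul_div_pi_sq_sub_le {θ : ℝ} (h0 : 0 ≤ θ) (hπ : θ ≤ π) :
    (1 - 2 * θ / π) ^ 2 - 2 * (1 - 2 * θ / π) * cos θ + 1 ≤ π / 2 * sin θ := by
  obtain ⟨a, rfl⟩ : ∃ a, θ = 2 * a := ⟨θ / 2, by ring⟩
  set b := π / 2 - a with hb_def
  have ha : 0 ≤ a := by linarith
  have hb : 0 ≤ b := by linarith
  have hs0 : 0 ≤ sin a := sin_nonneg_of_nonneg_of_le_pi ha (by linarith)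
  have hk0 : 0 ≤ cos a := cos_nonneg_of_mem_Icc ⟨by linarith, by linarith⟩
  have hsa : sin a ≤ a := sin_le ha
  have hkb : cos a ≤ b := sin_pi_div_two_sub a ▸ sin_le hb
  have has : a ≤ π / 2 * sin a := by
    have := mul_le_sin ha (by linarith); field_simp at this ⊢; linarith
  have hbk : b ≤ π / 2 * cos a := by
    have := mul_le_sin hb (by linarith); rw [sin_pi_div_two_sub] at this
    field_simp at this ⊢; linarith
  have hlhs : (1 - 2 * (2 * a) / π) ^ 2 - 2 * (1 - 2 * (2 * a) / π) * cos (2 * a) + 1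
      = 16 * (b ^ 2 * sin a ^ 2 + a ^ 2 * cos a ^ 2) / π ^ 2 := by
    rw [cos_two_mul, hb_def]
    field_simp
    linear_combination (-16 * (π - 2 * a) ^ 2) * sin_sq_add_cos_sq a
  have hab : a * b ≤ π ^ 2 / 16 := by nlinarith [sq_nonneg (a - b)]
  have h1 : b ^ 2 * sin a ^ 2 ≤ π / 2 * (sin a * cos a) * (a * b) := by
    have := mul_le_mul hbk hsa hs0 (by positivity)
    nlinarith [mul_nonneg hb hs0]
  have h2 : a ^ 2 * cos a ^ 2 ≤ π / 2 * (sin a * cos a) * (a * b) := by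
    have := mul_le_mul has hkb hk0 (by positivity)
    nlinarith [mul_nonneg ha hk0]
  have hsk : 0 ≤ sin a * cos a := mul_nonneg hs0 hk0
  rw [hlhs, sin_two_mul, div_le_iff₀ (by positivity)]
  nlinarith [mul_le_mul_of_nonneg_left hab hsk]

section UnitVectors

variable {V : Type*} [NormedAddCommGroup V] [InnerProductSpace ℝ V] {x y : V}

lemma norm_add_eq_two_mul_cos_half_angle (hx : ‖x‖ = 1) (hy : ‖y‖ = 1) :
    ‖x + y‖ = 2 * cos (angle x y / 2) := by
  have hcos : 0 ≤ cos (angle x y / 2) :=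
    cos_nonneg_of_mem_Icc ⟨by linarith [angle_nonneg x y, pi_pos], by linarith [angle_le_pi x y]⟩
  refine (sq_eq_sq₀ (norm_nonneg _) (by positivity)).1 ?_
  rw [norm_add_sq_real, hx, hy, inner_eq_cos_angle_of_norm_eq_one hx hy, mul_pow, cos_sq,
    mul_div_cancel₀ _ two_ne_zero]
  ring

lemma norm_smul_sub_sq_of_norm_eq_one (hx : ‖x‖ = 1) (hy : ‖y‖ = 1) (t : ℝ) :
    ‖t • x - y‖ ^ 2 = t ^ 2 - 2 * t * cos (angle x y) + 1 := by
  rw [norm_sub_sq_real, norm_smul, real_inner_smul_left, hx, hy,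
    inner_eq_cos_angle_of_norm_eq_one hx hy, Real.norm_eq_abs, mul_one, sq_abs]
  ring

lemma norm_sub_inner_smul_of_norm_eq_one (hx : ‖x‖ = 1) (hy : ‖y‖ = 1) :
    ‖y - ⟪x, y⟫ • x‖ = sin (angle x y) := by
  refine (sq_eq_sq₀ (norm_nonneg _) (sin_angle_nonneg x y)).1 ?_
  rw [← neg_sub, norm_neg, norm_smul_sub_sq_of_norm_eq_one hx hy,
    inner_eq_cos_angle_of_norm_eq_one hx hy, sin_sq]
  ring

lemma norm_one_sub_two_mul_angle_div_pi_smul_sub_sq_le (hx : ‖x‖ = 1) (hy : ‖y‖ = 1) :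
    ‖(1 - 2 * angle x y / π) • x - y‖ ^ 2 ≤ π / 2 * sin (angle x y) := by
  rw [norm_smul_sub_sq_of_norm_eq_one hx hy]
  exact one_sub_two_mul_div_pi_sq_sub_le (angle_nonneg x y) (angle_le_pi x y)

end UnitVectors

section Model

variable {m n : ℕ}

lemma inner_eq_sum_mul (u v : EuclideanSpace ℝ (Fin m)) : ⟪u, v⟫ = ∑ i, u i * v i := by
  simp [PiLp.inner_apply, mul_comm]

lemma inner_onesE (v : EuclideanSpace ℝ (Fin m)) : ⟪v, onesE m⟫ = ∑ i, v i := by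
  simp [inner_eq_sum_mul, onesE]

variable (vs : EuclideanSpace ℝ (Fin m)) (ws : EuclideanSpace ℝ (Fin n))
  (v : EuclideanSpace ℝ (Fin m)) (w : EuclideanSpace ℝ (Fin n))

lemma inner_gradV :
    ⟪v, gradV vs ws v w⟫ = (∑ i, v i ^ 2 + (∑ i, v i) ^ 2 - (∑ i, v i) * (∑ i, vs i)
      - (1 - 2 * angle w ws / π) * ∑ i, v i * vs i) / 4 := by
  simp only [gradV, real_inner_smul_right, inner_sub_right, inner_add_right, inner_onesE]
  simp only [inner_eq_sum_mul, ← sq]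
  ring

variable {vs ws v w}

lemma coarseG_eq_of_norm_eq_one (hw : ‖w‖ = 1) (hws : ‖ws‖ = 1) :
    coarseG vs ws v w = (2 * √(2 * π))⁻¹ • ((4 * ⟪v, gradV vs ws v w⟫) • w
      + (∑ i, v i * vs i) • ((1 - 2 * angle w ws / π) • w - ws)) := by
  have hcos : cos (angle w ws / 2) = ‖w + ws‖ / 2 := by
    rw [norm_add_eq_two_mul_cos_half_angle hw hws]; ring
  rw [coarseG, hw, inv_one, one_smul, hcos, inner_gradV]
  rcases eq_or_ne (w + ws) 0 with h | h
  · rw [h, smul_zero, smul_zero, sub_zero, eq_neg_of_add_eq_zero_right h]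
    match_scalars
    field_simp
    ring
  · have := norm_ne_zero_iff.2 h
    match_scalars <;> field_simp
    ring

lemma inner_coarseG_gradW (hw : ‖w‖ = 1) (hws : ‖ws‖ = 1) :
    ⟪coarseG vs ws v w, gradW vs ws v w⟫
      = (∑ i, v i * vs i) ^ 2 * sin (angle w ws) / (4 * π * √(2 * π)) := by
  have hwu : ⟪w, ws - ⟪w, ws⟫ • w⟫ = 0 := by
    rw [inner_sub_right, real_inner_smul_right, real_inner_self_eq_norm_sq, hw]; ring
  have hwsu : ⟪ws, ws - ⟪w, ws⟫ • w⟫ = sin (angle w ws) ^ 2 := by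
    rw [← norm_sub_inner_smul_of_norm_eq_one hw hws, ← real_inner_self_eq_norm_sq,
      inner_sub_left _ _ (ws - _), real_inner_smul_left, hwu, mul_zero, sub_zero]
  rw [coarseG_eq_of_norm_eq_one hw hws, gradW, hw, one_pow, div_one, mul_one,
    norm_sub_inner_smul_of_norm_eq_one hw hws]
  simp only [real_inner_smul_left, real_inner_smul_right, inner_add_left, inner_sub_left, hwu,
    hwsu]
  have hsin : (sin (angle w ws))⁻¹ * sin (angle w ws) ^ 2 = sin (angle w ws) := by
    rw [sq, ← mul_assoc, inv_mul_mul_self]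
  linear_combination (∑ i, v i * vs i) ^ 2 / (4 * π * √(2 * π)) * hsin

lemma norm_coarseG_sq_le (hw : ‖w‖ = 1) (hws : ‖ws‖ = 1) :
    ‖coarseG vs ws v w‖ ^ 2 ≤ 4 / π * ⟪v, gradV vs ws v w⟫ ^ 2
      + π * √(2 * π) / 2 * ⟪coarseG vs ws v w, gradW vs ws v w⟫ := by
  set q := ⟪v, gradV vs ws v w⟫
  set S := ∑ i, v i * vs i
  have hnorm : ‖(4 * q) • w + S • ((1 - 2 * angle w ws / π) • w - ws)‖ ^ 2
      ≤ 32 * q ^ 2 + π * S ^ 2 * sin (angle w ws) :=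
    calc _ ≤ (‖(4 * q) • w‖ + ‖S • ((1 - 2 * angle w ws / π) • w - ws)‖) ^ 2 :=
          pow_le_pow_left₀ (norm_nonneg _) (norm_add_le _ _) 2
      _ ≤ 2 * (‖(4 * q) • w‖ ^ 2 + ‖S • ((1 - 2 * angle w ws / π) • w - ws)‖ ^ 2) := add_sq_le
      _ = 32 * q ^ 2 + 2 * S ^ 2 * ‖(1 - 2 * angle w ws / π) • w - ws‖ ^ 2 := by
          simp only [norm_smul, hw, mul_pow, Real.norm_eq_abs, sq_abs]; ring
      _ ≤ 32 * q ^ 2 + 2 * S ^ 2 * (π / 2 * sin (angle w ws)) := by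
          gcongr; exact norm_one_sub_two_mul_angle_div_pi_smul_sub_sq_le hw hws
      _ = 32 * q ^ 2 + π * S ^ 2 * sin (angle w ws) := by ring
  rw [inner_coarseG_gradW hw hws, coarseG_eq_of_norm_eq_one hw hws, norm_smul, mul_pow,
    norm_inv, Real.norm_eq_abs, abs_of_pos (by positivity), inv_pow, mul_pow,
    sq_sqrt (by positivity)]
  calc _ ≤ (2 ^ 2 * (2 * π))⁻¹ * (32 * q ^ 2 + π * S ^ 2 * sin (angle w ws)) := by gcongr
    _ = _ := by field_simp; ring

end Model

theorem coarse_gradient_sufficiently_correlated_general {m n : ℕ}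
    (vs : EuclideanSpace ℝ (Fin m)) (ws : EuclideanSpace ℝ (Fin n))
    (hws : ‖ws‖ = 1) (C : ℝ) :
    ∃ A > (0 : ℝ), ∀ (v : EuclideanSpace ℝ (Fin m)) (w : EuclideanSpace ℝ (Fin n)),
      ‖w‖ = 1 → ‖v‖ ≤ C →
      ‖coarseG vs ws v w‖ ^ 2
        ≤ A * (‖gradV vs ws v w‖ ^ 2
            + (inner ℝ (coarseG vs ws v w) (gradW vs ws v w) : ℝ)) := by
  refine ⟨4 * C ^ 2 / π + π * √(2 * π) / 2, by positivity, fun v w hw hv => ?_⟩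
  have hgradV : ⟪v, gradV vs ws v w⟫ ^ 2 ≤ C ^ 2 * ‖gradV vs ws v w‖ ^ 2 := by
    rw [← mul_pow, ← sq_abs]
    exact pow_le_pow_left₀ (abs_nonneg _) ((abs_real_inner_le_norm _ _).trans
      (mul_le_mul_of_nonneg_right hv (norm_nonneg _))) 2
  have hcorr : 0 ≤ ⟪coarseG vs ws v w, gradW vs ws v w⟫ := by
    rw [inner_coarseG_gradW hw hws]
    have := sin_angle_nonneg w ws
    positivity
  calc ‖coarseG vs ws v w‖ ^ 2
      ≤ 4 / π * ⟪v, gradV vs ws v w⟫ ^ 2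
        + π * √(2 * π) / 2 * ⟪coarseG vs ws v w, gradW vs ws v w⟫ := norm_coarseG_sq_le hw hws
    _ ≤ 4 / π * (C ^ 2 * ‖gradV vs ws v w‖ ^ 2)
        + π * √(2 * π) / 2 * ⟪coarseG vs ws v w, gradW vs ws v w⟫ := by gcongr
    _ ≤ _ := by
      have h₁ : 0 ≤ 4 * C ^ 2 / π * ⟪coarseG vs ws v w, gradW vs ws v w⟫ := by positivity
      have h₂ : 0 ≤ π * √(2 * π) / 2 * ‖gradV vs ws v w‖ ^ 2 := by positivity
      linear_combination h₁ + h₂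

/-- For unit `w` and `‖v‖ ≤ C`, there exists `A > 0` (depending only on `C`, `v*`, `m`)
with `‖E_Z[g(v,w;Z)]‖² ≤ A(‖∂f/∂v(v,w)‖² + ⟨E_Z[g(v,w;Z)], ∂f/∂w(v,w)⟩)`. -/
theorem coarse_gradient_sufficiently_correlated {m n : ℕ}
    (vs : EuclideanSpace ℝ (Fin m)) (ws : EuclideanSpace ℝ (Fin n))
    (hws : ‖ws‖ = 1) (C : ℝ) (hC : 0 < C) :
    ∃ A > (0 : ℝ), ∀ (v : EuclideanSpace ℝ (Fin m)) (w : EuclideanSpace ℝ (Fin n)),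
      ‖w‖ = 1 → ‖v‖ ≤ C →
      ‖coarseG vs ws v w‖ ^ 2
        ≤ A * (‖gradV vs ws v w‖ ^ 2
            + (inner ℝ (coarseG vs ws v w) (gradW vs ws v w) : ℝ)) :=
  coarse_gradient_sufficiently_correlated_general vs ws hws C
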